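/- arXiv:2411.00947 — 2 statements merged into one kernel-verified Lean document; each statement's English description precedes it below -/
import Mathlib

section
/- Fix K ≥ 1. Let d(i₁…i_K; j₁…j_K) be any real array on pairs of K-tuples of pairwise distinct elements of {1,…,n} (n ≥ 2K), π a uniformly random permutation of {1,…,n}, and Γ = Σ_{i₁≠⋯≠i_K} d(i₁…i_K; π(i₁)…π(i_K)). Then: (i) E[Γ] = (n)_K⁻¹ Σ_{i₁≠⋯≠i_K} Σ_{j₁≠⋯≠j_K} d(i₁…i_K; j₁…j_K); and (ii) there exists a constant C_K depending only on K such that, for every n and every array d, Var(Γ) ≤ C_K·n^{2K−1}·(n)_K⁻² · Σ_{i₁≠⋯≠i_K} Σ_{j₁≠⋯≠j_K} d̃(i₁…i_K; j₁…j_K)². -/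
open MeasureTheory ProbabilityTheory Filter Matrix
open scoped NNReal Topology

noncomputable section

namespace QAPPaper

/-- Sum of `f i j` over the ordered off-diagonal pairs `i ≠ j` of `Fin n`. -/
def offSum (n : ℕ) (f : Fin n → Fin n → ℝ) : ℝ :=
  ∑ p ∈ (Finset.univ : Finset (Fin n × Fin n)).filter (fun p => p.1 ≠ p.2), f p.1 p.2

/-- Average `ā` of the `n(n-1)` off-diagonal entries. -/
def offAvg (n : ℕ) (f : Fin n → Fin n → ℝ) : ℝ :=
  ((n : ℝ) * ((n : ℝ) - 1))⁻¹ * offSum n f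

/-- The sample covariance `φ̂₀`. -/
def phiHat0 (n : ℕ) (a b : Fin n → Fin n → ℝ) : ℝ :=
  ((n : ℝ) * ((n : ℝ) - 1) - 1)⁻¹ *
    offSum n (fun i j => (a i j - offAvg n a) * (b i j - offAvg n b))

/-- The sample variance `η̂₂`. -/
def etaHat2 (n : ℕ) (a : Fin n → Fin n → ℝ) : ℝ :=
  ((n : ℝ) * ((n : ℝ) - 1) - 1)⁻¹ * offSum n (fun i j => (a i j - offAvg n a) ^ 2)

/-- The sample Pearson correlation `ρ̂`. -/
def rhoHat (n : ℕ) (a b : Fin n → Fin n → ℝ) : ℝ :=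
  phiHat0 n a b / (Real.sqrt (etaHat2 n a) * Real.sqrt (etaHat2 n b))

/-- The estimator `η̂₁,φ`. -/
def etaHat1phi (n : ℕ) (a b : Fin n → Fin n → ℝ) : ℝ :=
  (n : ℝ)⁻¹ * ∑ i : Fin n,
    (((n : ℝ) - 1)⁻¹ *
        ∑ j ∈ Finset.univ.erase i, (a i j - offAvg n a) * (b i j - offAvg n b)) ^ 2

/-- The variance estimator `v̂`. -/
def vHat (n : ℕ) (a b : Fin n → Fin n → ℝ) : ℝ :=
  4 * etaHat1phi n a b / (etaHat2 n a * etaHat2 n b)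

variable {X : Type*} [MeasurableSpace X]

/-- Mean `Φ₀` of a degree-2 kernel under two i.i.d. draws from `ν`. -/
def kMean (Φ : X → X → ℝ) (ν : Measure X) : ℝ := ∫ q, Φ q.1 q.2 ∂(ν.prod ν)

/-- First-order projection `Φ₁` of a degree-2 kernel. -/
def proj1 (Φ : X → X → ℝ) (ν : Measure X) (x : X) : ℝ := ∫ y, Φ x y ∂ν

/-- First-order variance `η₁,Φ = E[(Φ₁(X) − Φ₀)²]`. -/
def eta1 (Φ : X → X → ℝ) (ν : Measure X) : ℝ :=
  ∫ x, (proj1 Φ ν x - kMean Φ ν) ^ 2 ∂ν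

/-- Second-order variance `η₂,Φ = E[(Φ(X,X') − Φ₀)²]`. -/
def eta2 (Φ : X → X → ℝ) (ν : Measure X) : ℝ :=
  ∫ q, (Φ q.1 q.2 - kMean Φ ν) ^ 2 ∂(ν.prod ν)

variable {𝓡 𝓢 : Type*}

/-- The kernel `α` viewed as a kernel on pairs `(r, s)`. -/
def kerA (α : 𝓡 → 𝓡 → ℝ) : 𝓡 × 𝓢 → 𝓡 × 𝓢 → ℝ := fun x y => α x.1 y.1

/-- The kernel `β` viewed as a kernel on pairs `(r, s)`. -/
def kerB (β : 𝓢 → 𝓢 → ℝ) : 𝓡 × 𝓢 → 𝓡 × 𝓢 → ℝ := fun x y => β x.2 y.2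

/-- The covariance kernel `φ(r,s;r',s') = (α(r,r') − α₀)(β(s,s') − β₀)`. -/
def kerPhi [MeasurableSpace 𝓡] [MeasurableSpace 𝓢] (α : 𝓡 → 𝓡 → ℝ) (β : 𝓢 → 𝓢 → ℝ)
    (μ : Measure (𝓡 × 𝓢)) : 𝓡 × 𝓢 → 𝓡 × 𝓢 → ℝ :=
  fun x y => (α x.1 y.1 - kMean (kerA α) μ) * (β x.2 y.2 - kMean (kerB β) μ)

variable {Ω : Type*} [MeasurableSpace Ω]

/-- Dyadic data matrix: `a_ii = 0` and `a_ij = κ(X_i, X_j)` for `i ≠ j`. -/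
def dyad {𝓧 : Type*} (κ : 𝓧 → 𝓧 → ℝ) (Xs : ℕ → Ω → 𝓧) (n : ℕ) (ω : Ω) :
    Fin n → Fin n → ℝ :=
  fun i j => if i = j then 0 else κ (Xs i.val ω) (Xs j.val ω)

/-- CDF of the centered normal law `N(0, v)`. -/
def gaussCDF (v t : ℝ) : ℝ := ((gaussianReal 0 v.toNNReal) (Set.Iic t)).toReal

/-- Permutation CDF `L(t; stat^π)` of a statistic under the uniform distribution over
all permutations of `{1, …, n}`. -/
def permCDF (n : ℕ) (stat : Equiv.Perm (Fin n) → ℝ) (t : ℝ) : ℝ :=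
  ((n.factorial : ℝ))⁻¹ *
    ∑ π : Equiv.Perm (Fin n), Set.indicator (Set.Iic t) (fun _ => (1 : ℝ)) (stat π)


/-- Demeaned row-wise average `ā_i = (n−2)⁻¹ Σ_{j≠i} (a_ij − ā)`. -/
def rowAvg (n : ℕ) (a : Fin n → Fin n → ℝ) (i : Fin n) : ℝ :=
  ((n : ℝ) - 2)⁻¹ * ∑ j ∈ Finset.univ.erase i, (a i j - offAvg n a)

/-- Demeaned element `ã_ij = a_ij − ā_i − ā_j − ā`. -/
def tilde (n : ℕ) (a : Fin n → Fin n → ℝ) (i j : Fin n) : ℝ :=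
  a i j - rowAvg n a i - rowAvg n a j - offAvg n a

/-- The moment `m₁₂(a) = n⁻¹ Σ_i ā_i²`. -/
def m12 (n : ℕ) (a : Fin n → Fin n → ℝ) : ℝ :=
  (n : ℝ)⁻¹ * ∑ i, rowAvg n a i ^ 2

/-- The cross moment `m₁₂^{(kl)}(a) = n⁻¹ Σ_i ā_i^{(k)} ā_i^{(l)}`. -/
def m12c (n : ℕ) (a b : Fin n → Fin n → ℝ) : ℝ :=
  (n : ℝ)⁻¹ * ∑ i, rowAvg n a i * rowAvg n b i

/-- The moment `m₂₂(a) = (n(n−1))⁻¹ Σ_{i≠j} ã_ij²`. -/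
def m22 (n : ℕ) (a : Fin n → Fin n → ℝ) : ℝ :=
  ((n : ℝ) * ((n : ℝ) - 1))⁻¹ * offSum n (fun i j => tilde n a i j ^ 2)

/-- The double-indexed permutation statistic `W = (n(n−1))⁻¹ Σ_{i≠j} a_ij b_{π(i)π(j)}`. -/
def Wdips (n : ℕ) (a b : Fin n → Fin n → ℝ) (π : Equiv.Perm (Fin n)) : ℝ :=
  ((n : ℝ) * ((n : ℝ) - 1))⁻¹ * offSum n (fun i j => a i j * b (π i) (π j))

/-- The linear component `V = (2(n−2)/(n(n−1))) Σ_i ā_i b̄_{π(i)}`. -/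
def Vdips (n : ℕ) (a b : Fin n → Fin n → ℝ) (π : Equiv.Perm (Fin n)) : ℝ :=
  (2 * ((n : ℝ) - 2) / ((n : ℝ) * ((n : ℝ) - 1))) *
    ∑ i, rowAvg n a i * rowAvg n b (π i)

/-- The residual component `Δ = (n(n−1))⁻¹ Σ_{i≠j} ã_ij b̃_{π(i)π(j)}`. -/
def Ddips (n : ℕ) (a b : Fin n → Fin n → ℝ) (π : Equiv.Perm (Fin n)) : ℝ :=
  ((n : ℝ) * ((n : ℝ) - 1))⁻¹ * offSum n (fun i j => tilde n a i j * tilde n b (π i) (π j))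

/-- Expectation with respect to the uniform distribution on permutations. -/
def permE (n : ℕ) (f : Equiv.Perm (Fin n) → ℝ) : ℝ :=
  (n.factorial : ℝ)⁻¹ * ∑ π : Equiv.Perm (Fin n), f π

/-- Variance with respect to the uniform distribution on permutations. -/
def permVar (n : ℕ) (f : Equiv.Perm (Fin n) → ℝ) : ℝ :=
  permE n (fun π => (f π - permE n f) ^ 2)


/-- The `K`-tuples of pairwise distinct elements of `{1,…,n}`. -/
def injTuples (n K : ℕ) : Finset (Fin K → Fin n) :=
  Finset.univ.filter Function.Injective

/-- The `K`-indexed permutation statistic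
`Γ = Σ_{i₁≠⋯≠i_K} d(i₁…i_K; π(i₁)…π(i_K))`. -/
def gammaStat (n K : ℕ) (d : (Fin K → Fin n) → (Fin K → Fin n) → ℝ)
    (π : Equiv.Perm (Fin n)) : ℝ :=
  ∑ i ∈ injTuples n K, d i (fun s => π (i s))

/-- The doubly centered array `d̃`. -/
def dCenter (n K : ℕ) (d : (Fin K → Fin n) → (Fin K → Fin n) → ℝ)
    (i j : Fin K → Fin n) : ℝ :=
  d i j - (n.descFactorial K : ℝ)⁻¹ * ∑ i' ∈ injTuples n K, d i' j -
    (n.descFactorial K : ℝ)⁻¹ * ∑ j' ∈ injTuples n K, d i j' +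
    ((n.descFactorial K : ℝ)⁻¹) ^ 2 *
      ∑ i' ∈ injTuples n K, ∑ j' ∈ injTuples n K, d i' j'

/-- The centered array `ã`. -/
def aCenter (n K : ℕ) (a : (Fin K → Fin n) → ℝ) (i : Fin K → Fin n) : ℝ :=
  a i - (n.descFactorial K : ℝ)⁻¹ * ∑ i' ∈ injTuples n K, a i'

/-- The permutation statistic
`U_n = (n)_K⁻¹ Σ_{i₁≠⋯≠i_K} a(i₁,…,i_K) b(π(i₁),…,π(i_K))`. -/
def UnStat (n K : ℕ) (a b : (Fin K → Fin n) → ℝ) (π : Equiv.Perm (Fin n)) : ℝ :=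
  (n.descFactorial K : ℝ)⁻¹ * ∑ i ∈ injTuples n K, a i * b (fun s => π (i s))





variable {n K : ℕ}

lemma mem_injTuples {i : Fin K → Fin n} : i ∈ injTuples n K ↔ Function.Injective i := by
  simp [injTuples]

lemma card_injTuples : (injTuples n K).card = n.descFactorial K := by
  classical
  rw [injTuples, ← Fintype.card_subtype]
  rw [Fintype.card_congr (Equiv.subtypeInjectiveEquivEmbedding (Fin K) (Fin n))]
  simp [Fintype.card_embedding_eq]

lemma exists_perm_extend {γ : Type*} [Fintype γ] (u v : γ → Fin n)
    (h : ∀ a b, u a = u b ↔ v a = v b) :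
    ∃ π : Equiv.Perm (Fin n), ∀ a, π (u a) = v a := by
  classical
  set A := Finset.image u Finset.univ with hAdef
  set B := Finset.image v Finset.univ with hBdef
  have hA : ∀ x : {x // x ∈ A}, ∃ a, u a = x.1 := by
    rintro ⟨x, hx⟩
    simpa [hAdef, eq_comm] using hx
  choose g hg using hA
  have hmem : ∀ x : {x // x ∈ A}, v (g x) ∈ B := fun x =>
    Finset.mem_image_of_mem _ (Finset.mem_univ _)
  let f : {x // x ∈ A} → {x // x ∈ B} := fun x => ⟨v (g x), hmem x⟩
  have hinj : Function.Injective f := by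
    intro x y hxy
    have h1 : v (g x) = v (g y) := congrArg Subtype.val hxy
    have h2 : u (g x) = u (g y) := (h _ _).2 h1
    ext
    rw [← hg x, ← hg y, h2]
  have hsurj : Function.Surjective f := by
    rintro ⟨y, hy⟩
    obtain ⟨a, -, rfl⟩ := Finset.mem_image.1 hy
    refine ⟨⟨u a, Finset.mem_image_of_mem _ (Finset.mem_univ _)⟩, ?_⟩
    exact Subtype.ext ((h _ _).1 (hg _))
  let e := Equiv.ofBijective f ⟨hinj, hsurj⟩
  refine ⟨e.extendSubtype, fun a => ?_⟩
  have hmemA : u a ∈ A := Finset.mem_image_of_mem _ (Finset.mem_univ _)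
  rw [Equiv.extendSubtype_apply_of_mem e (u a) hmemA]
  exact (h _ _).1 (hg ⟨u a, hmemA⟩)

lemma perm_avg_eq {β : Type*} [DecidableEq β] (g : Equiv.Perm (Fin n) → β)
    (htrans : ∀ π₁ π₂ : Equiv.Perm (Fin n), ∃ ρ, ∀ π, g π = g π₁ → g (ρ * π) = g π₂)
    (f : β → ℝ) :
    ((n.factorial : ℝ))⁻¹ * ∑ π : Equiv.Perm (Fin n), f (g π) =
      ((Finset.univ.image g).card : ℝ)⁻¹ * ∑ p ∈ Finset.univ.image g, f p := by
  classical
  have hle : ∀ π₁ π₂ : Equiv.Perm (Fin n),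
      (Finset.univ.filter (fun π => g π = g π₁)).card ≤
        (Finset.univ.filter (fun π => g π = g π₂)).card := by
    intro π₁ π₂
    obtain ⟨ρ, hρ⟩ := htrans π₁ π₂
    apply Finset.card_le_card_of_injOn (fun π => ρ * π)
    · intro π hπ
      simp only [Finset.coe_filter, Finset.mem_filter, Finset.mem_univ, true_and, Set.mem_setOf_eq] at hπ ⊢
      exact hρ π hπ
    · intro a _ b _ hab
      exact mul_left_cancel hab
  have hfib : ∀ π₁ π₂ : Equiv.Perm (Fin n),
      (Finset.univ.filter (fun π => g π = g π₁)).card =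
        (Finset.univ.filter (fun π => g π = g π₂)).card :=
    fun π₁ π₂ => le_antisymm (hle π₁ π₂) (hle π₂ π₁)
  set F := (Finset.univ.filter (fun π => g π = g 1)).card with hF
  have hconst : ∀ p ∈ Finset.univ.image g,
      (Finset.univ.filter (fun π => g π = p)).card = F := by
    intro p hp
    obtain ⟨π₁, -, rfl⟩ := Finset.mem_image.1 hp
    exact hfib π₁ 1
  have hcardsum : ((Finset.univ : Finset (Equiv.Perm (Fin n)))).card =
      ∑ p ∈ Finset.univ.image g, (Finset.univ.filter (fun π => g π = p)).card :=
    Finset.card_eq_sum_card_fiberwise (fun x _ => Finset.mem_image_of_mem _ (Finset.mem_univ x))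
  have hMF : (Finset.univ.image g).card * F = n.factorial := by
    have : ((Finset.univ : Finset (Equiv.Perm (Fin n)))).card = n.factorial := by
      rw [Finset.card_univ, Fintype.card_perm, Fintype.card_fin]
    rw [← this, hcardsum, Finset.sum_congr rfl hconst, Finset.sum_const, smul_eq_mul]
  have hsum : ∑ π : Equiv.Perm (Fin n), f (g π) =
      (F : ℝ) * ∑ p ∈ Finset.univ.image g, f p := by
    rw [Finset.sum_comp f g, Finset.mul_sum]
    refine Finset.sum_congr rfl fun p hp => ?_
    rw [hconst p hp, nsmul_eq_mul]
  rw [hsum]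
  have hM0 : 0 < (Finset.univ.image g).card := by
    refine Finset.card_pos.2 ⟨g 1, Finset.mem_image_of_mem _ (Finset.mem_univ _)⟩
  have hF0 : 0 < F := by
    refine Finset.card_pos.2 ⟨1, ?_⟩
    simp
  have hfac : (n.factorial : ℝ) = ((Finset.univ.image g).card : ℝ) * (F : ℝ) := by
    exact_mod_cast hMF.symm
  rw [hfac]
  field_simp


variable {n K : ℕ}

/-- The coincidence pattern of two tuples. -/
def pat (i i' : Fin K → Fin n) : Finset (Fin K × Fin K) :=
  Finset.univ.filter (fun st => i' st.1 = i st.2)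

/-- Pairs of tuples with matching pattern. -/
def pairSet (n K : ℕ) (i i' : Fin K → Fin n) : Finset ((Fin K → Fin n) × (Fin K → Fin n)) :=
  ((injTuples n K) ×ˢ (injTuples n K)).filter
    (fun p => ∀ s t, p.2 s = p.1 t ↔ i' s = i t)

lemma tuple_image {i : Fin K → Fin n} (hi : Function.Injective i) :
    Finset.univ.image (fun π : Equiv.Perm (Fin n) => (fun s => π (i s))) = injTuples n K := by
  classical
  ext j
  simp only [Finset.mem_image, Finset.mem_univ, true_and, mem_injTuples]
  constructor
  · rintro ⟨π, rfl⟩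
    exact fun a b hab => hi (π.injective hab)
  · intro hj
    obtain ⟨π, hπ⟩ := exists_perm_extend i j
      (fun a b => ⟨fun h => by rw [hi h], fun h => by rw [hj h]⟩)
    exact ⟨π, funext hπ⟩

lemma pair_image {i i' : Fin K → Fin n} (hi : Function.Injective i)
    (hi' : Function.Injective i') :
    Finset.univ.image
      (fun π : Equiv.Perm (Fin n) => ((fun s => π (i s), fun s => π (i' s)) :
        (Fin K → Fin n) × (Fin K → Fin n))) = pairSet n K i i' := by
  classical
  ext p
  simp only [Finset.mem_image, Finset.mem_univ, true_and, pairSet, Finset.mem_filter,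
    Finset.mem_product, mem_injTuples]
  constructor
  · rintro ⟨π, rfl⟩
    refine ⟨⟨fun a b hab => hi (π.injective hab), fun a b hab => hi' (π.injective hab)⟩,
      fun s t => ⟨fun h => π.injective h, fun h => by simp only []; rw [h]⟩⟩
  · rintro ⟨⟨hj, hj'⟩, hpat⟩
    obtain ⟨j, j'⟩ := p
    simp only at hj hj' hpat ⊢
    have hcompat : ∀ a b, Sum.elim i i' a = Sum.elim i i' b ↔
        Sum.elim j j' a = Sum.elim j j' b := by
      rintro (a | a) (b | b) <;> simp only [Sum.elim_inl, Sum.elim_inr]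
      · exact ⟨fun h => by rw [hi h], fun h => by rw [hj h]⟩
      · constructor
        · intro h; exact ((hpat b a).2 h.symm).symm
        · intro h; exact ((hpat b a).1 h.symm).symm
      · exact (hpat a b).symm
      · exact ⟨fun h => by rw [hi' h], fun h => by rw [hj' h]⟩
    obtain ⟨π, hπ⟩ := exists_perm_extend (Sum.elim i i') (Sum.elim j j') hcompat
    exact ⟨π, by
      have h1 : (fun s => π (i s)) = j := funext fun s => hπ (Sum.inl s)
      have h2 : (fun s => π (i' s)) = j' := funext fun s => hπ (Sum.inr s)
      rw [h1, h2]⟩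

lemma perm_avg_tuple {i : Fin K → Fin n} (hi : Function.Injective i)
    (f : (Fin K → Fin n) → ℝ) :
    (n.factorial : ℝ)⁻¹ * ∑ π : Equiv.Perm (Fin n), f (fun s => π (i s)) =
      ((n.descFactorial K : ℝ))⁻¹ * ∑ j ∈ injTuples n K, f j := by
  classical
  have h := perm_avg_eq (fun π : Equiv.Perm (Fin n) => (fun s => π (i s)))
    (fun π₁ π₂ => ⟨π₂ * π₁⁻¹, fun π hπ => by
      funext s
      have : π (i s) = π₁ (i s) := congrFun hπ s
      simp [this]⟩) f
  rw [tuple_image hi, card_injTuples] at h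
  exact h

lemma perm_avg_pair {i i' : Fin K → Fin n} (hi : Function.Injective i)
    (hi' : Function.Injective i') (f : (Fin K → Fin n) → (Fin K → Fin n) → ℝ) :
    (n.factorial : ℝ)⁻¹ * ∑ π : Equiv.Perm (Fin n),
        f (fun s => π (i s)) (fun s => π (i' s)) =
      (((pairSet n K i i').card : ℝ))⁻¹ * ∑ p ∈ pairSet n K i i', f p.1 p.2 := by
  classical
  have h := perm_avg_eq
    (fun π : Equiv.Perm (Fin n) => ((fun s => π (i s), fun s => π (i' s)) :
      (Fin K → Fin n) × (Fin K → Fin n)))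
    (fun π₁ π₂ => ⟨π₂ * π₁⁻¹, fun π hπ => by
      have h1 : (fun s => π (i s)) = fun s => π₁ (i s) := congrArg Prod.fst hπ
      have h2 : (fun s => π (i' s)) = fun s => π₁ (i' s) := congrArg Prod.snd hπ
      have h1' := congrFun h1
      have h2' := congrFun h2
      simp only [Prod.mk.injEq]
      constructor <;> funext s
      · simp [h1' s]
      · simp [h2' s]⟩)
    (fun p => f p.1 p.2)
  rw [pair_image hi hi'] at h
  exact h


variable {n K : ℕ}


lemma descFactorial_pos' (hn : K ≤ n) : (0:ℝ) < (n.descFactorial K : ℝ) := by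
  have : n.descFactorial K ≠ 0 := fun h =>
    absurd (Nat.descFactorial_eq_zero_iff_lt.1 h) (not_lt.2 hn)
  exact_mod_cast Nat.pos_of_ne_zero this

lemma permE_gamma (hn : K ≤ n)
    (d : (Fin K → Fin n) → (Fin K → Fin n) → ℝ) :
    permE n (gammaStat n K d) =
      (n.descFactorial K : ℝ)⁻¹ * ∑ i ∈ injTuples n K, ∑ j ∈ injTuples n K, d i j := by
  classical
  rw [permE]
  simp only [gammaStat]
  rw [Finset.sum_comm, Finset.mul_sum]
  rw [show ((n.descFactorial K:ℝ))⁻¹ * ∑ i ∈ injTuples n K, ∑ j ∈ injTuples n K, d i j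
      = ∑ i ∈ injTuples n K, (n.descFactorial K:ℝ)⁻¹ * ∑ j ∈ injTuples n K, d i j from
    Finset.mul_sum _ _ _]
  exact Finset.sum_congr rfl fun i hi => perm_avg_tuple (mem_injTuples.1 hi) (d i)

lemma sum_reindex_perm (π : Equiv.Perm (Fin n)) (F : (Fin K → Fin n) → ℝ) :
    ∑ i ∈ injTuples n K, F (fun s => π (i s)) = ∑ j ∈ injTuples n K, F j := by
  classical
  refine Finset.sum_bij' (fun i _ => fun s => π (i s)) (fun j _ => fun s => π.symm (j s))
    ?_ ?_ ?_ ?_ ?_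
  · intro a ha
    exact mem_injTuples.2 fun x y hxy => (mem_injTuples.1 ha) (π.injective hxy)
  · intro a ha
    exact mem_injTuples.2 fun x y hxy => (mem_injTuples.1 ha) (π.symm.injective hxy)
  · intro a _; funext s; simp
  · intro a _; funext s; simp
  · intro a _; rfl

lemma sum_dCenter_right (hn : K ≤ n) (d : (Fin K → Fin n) → (Fin K → Fin n) → ℝ)
    (i : Fin K → Fin n) : ∑ j ∈ injTuples n K, dCenter n K d i j = 0 := by
  classical
  have hc := descFactorial_pos' hn
  simp only [dCenter, Finset.sum_add_distrib, Finset.sum_sub_distrib, ← Finset.mul_sum,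
    Finset.sum_const, card_injTuples, nsmul_eq_mul]
  rw [Finset.sum_comm]
  field_simp
  ring

lemma sum_dCenter_left (hn : K ≤ n) (d : (Fin K → Fin n) → (Fin K → Fin n) → ℝ)
    (j : Fin K → Fin n) : ∑ i ∈ injTuples n K, dCenter n K d i j = 0 := by
  classical
  have hc := descFactorial_pos' hn
  simp only [dCenter, Finset.sum_add_distrib, Finset.sum_sub_distrib, Finset.sum_const,
    card_injTuples, nsmul_eq_mul]
  rw [← Finset.mul_sum]
  field_simp
  ring

lemma gammaStat_center (hn : K ≤ n) (d : (Fin K → Fin n) → (Fin K → Fin n) → ℝ)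
    (π : Equiv.Perm (Fin n)) :
    gammaStat n K (dCenter n K d) π =
      gammaStat n K d π -
        (n.descFactorial K : ℝ)⁻¹ * ∑ i ∈ injTuples n K, ∑ j ∈ injTuples n K, d i j := by
  classical
  have hc := descFactorial_pos' hn
  simp only [gammaStat, dCenter, Finset.sum_add_distrib, Finset.sum_sub_distrib]
  rw [show (∑ i ∈ injTuples n K, (n.descFactorial K : ℝ)⁻¹ * ∑ i' ∈ injTuples n K,
        d i' (fun s => π (i s)))
      = (n.descFactorial K : ℝ)⁻¹ * ∑ j ∈ injTuples n K, ∑ i' ∈ injTuples n K, d i' j by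
    rw [← Finset.mul_sum]
    congr 1
    exact sum_reindex_perm π (fun j => ∑ i' ∈ injTuples n K, d i' j)]
  rw [Finset.sum_comm (s := injTuples n K) (t := injTuples n K)
    (f := fun j i' => d i' j)]
  simp only [← Finset.mul_sum, Finset.sum_const, card_injTuples, nsmul_eq_mul]
  field_simp
  ring


variable {n K : ℕ}

lemma var_eq_sum_pairs (hn : K ≤ n) (d : (Fin K → Fin n) → (Fin K → Fin n) → ℝ) :
    permVar n (gammaStat n K d) =
      ∑ q ∈ (injTuples n K) ×ˢ (injTuples n K),
        ((pairSet n K q.1 q.2).card : ℝ)⁻¹ *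
          ∑ p ∈ pairSet n K q.1 q.2,
            dCenter n K d q.1 p.1 * dCenter n K d q.2 p.2 := by
  classical
  set e := dCenter n K d with he
  have h1 : permVar n (gammaStat n K d) = permE n (fun π => (gammaStat n K e π)^2) := by
    rw [permVar]
    congr 1
    funext π
    rw [he, gammaStat_center hn d π, permE_gamma hn d]
  rw [h1, permE]
  have h2 : ∀ π : Equiv.Perm (Fin n), (gammaStat n K e π)^2
      = ∑ q ∈ (injTuples n K) ×ˢ (injTuples n K),
          e q.1 (fun s => π (q.1 s)) * e q.2 (fun s => π (q.2 s)) := by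
    intro π
    rw [gammaStat, sq, Finset.sum_mul_sum, ← Finset.sum_product']
  simp only [h2]
  rw [Finset.sum_comm, Finset.mul_sum]
  refine Finset.sum_congr rfl fun q hq => ?_
  rw [Finset.mem_product] at hq
  exact perm_avg_pair (mem_injTuples.1 hq.1) (mem_injTuples.1 hq.2)
    (fun j j' => e q.1 j * e q.2 j')

lemma mem_pat_iff {i i' : Fin K → Fin n} {st : Fin K × Fin K} :
    st ∈ pat i i' ↔ i' st.1 = i st.2 := by simp [pat]

lemma mem_pairSet_iff {i i' : Fin K → Fin n} {p : (Fin K → Fin n) × (Fin K → Fin n)} :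
    p ∈ pairSet n K i i' ↔
      p.1 ∈ injTuples n K ∧ p.2 ∈ injTuples n K ∧ pat p.1 p.2 = pat i i' := by
  rw [pairSet, Finset.mem_filter, Finset.mem_product]
  constructor
  · rintro ⟨⟨h1, h2⟩, h3⟩
    refine ⟨h1, h2, ?_⟩
    ext st
    rw [mem_pat_iff, mem_pat_iff]
    exact h3 st.1 st.2
  · rintro ⟨h1, h2, h3⟩
    refine ⟨⟨h1, h2⟩, fun s t => ?_⟩
    have := Finset.ext_iff.1 h3 (s, t)
    rw [mem_pat_iff, mem_pat_iff] at this
    exact this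

lemma pat_injOn_fst {i i' : Fin K → Fin n} (hi : Function.Injective i) :
    Set.InjOn (Prod.fst : Fin K × Fin K → Fin K) ↑(pat i i') := by
  intro a ha b hb hab
  rw [Finset.mem_coe, mem_pat_iff] at ha hb
  have : i a.2 = i b.2 := by rw [← ha, ← hb, hab]
  exact Prod.ext hab (hi this)

lemma pat_injOn_snd {i i' : Fin K → Fin n} (hi' : Function.Injective i') :
    Set.InjOn (Prod.snd : Fin K × Fin K → Fin K) ↑(pat i i') := by
  intro a ha b hb hab
  rw [Finset.mem_coe, mem_pat_iff] at ha hb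
  have : i' a.1 = i' b.1 := by rw [ha, hb, hab]
  exact Prod.ext (hi' this) hab

lemma count_fixed (D : Finset (Fin K)) (w : Fin K → Fin n) :
    ((Finset.univ : Finset (Fin K → Fin n)).filter (fun x => ∀ s ∈ D, x s = w s)).card
      ≤ n ^ (K - D.card) := by
  classical
  have hle : ((Finset.univ : Finset (Fin K → Fin n)).filter
        (fun x => ∀ s ∈ D, x s = w s)).card
      ≤ (Finset.univ : Finset ({x // x ∈ Dᶜ} → Fin n)).card := by
    apply Finset.card_le_card_of_injOn (fun x => fun s => x s.1)
    · intro x _; exact Finset.mem_univ _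
    · intro x hx y hy hxy
      simp only [Finset.coe_filter, Set.mem_setOf_eq, Finset.mem_univ, true_and] at hx hy
      funext s
      by_cases hs : s ∈ D
      · rw [hx s hs, hy s hs]
      · exact congrFun hxy ⟨s, Finset.mem_compl.2 hs⟩
  refine hle.trans ?_
  rw [Finset.card_univ, Fintype.card_fun, Fintype.card_coe, Fintype.card_fin,
    Finset.card_compl, Fintype.card_fin]

lemma count_pat_snd (P : Finset (Fin K × Fin K)) (hP : Set.InjOn (Prod.fst : Fin K × Fin K → Fin K) ↑P)
    (i : Fin K → Fin n) :
    ((injTuples n K).filter (fun i' => pat i i' = P)).card ≤ n ^ (K - P.card) := by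
  classical
  set D := P.image Prod.fst with hD
  let w : Fin K → Fin n := fun s => if h : ∃ t, (s, t) ∈ P then i h.choose else i s
  have hsub : (injTuples n K).filter (fun i' => pat i i' = P) ⊆
      Finset.univ.filter (fun x => ∀ s ∈ D, x s = w s) := by
    intro x hx
    rw [Finset.mem_filter] at hx ⊢
    refine ⟨Finset.mem_univ _, fun s hs => ?_⟩
    obtain ⟨st, hst, rfl⟩ := Finset.mem_image.1 hs
    have hex : ∃ t, (st.1, t) ∈ P := ⟨st.2, hst⟩
    have hch : (st.1, hex.choose) ∈ P := hex.choose_spec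
    have hiff : ∀ q : Fin K × Fin K, q ∈ pat i x ↔ q ∈ P := fun q => by rw [hx.2]
    have hch2 := mem_pat_iff.1 ((hiff _).2 hch)
    simp only [w, dif_pos hex]
    exact hch2
  calc ((injTuples n K).filter (fun i' => pat i i' = P)).card
      ≤ _ := Finset.card_le_card hsub
    _ ≤ n ^ (K - D.card) := count_fixed D w
    _ = n ^ (K - P.card) := by rw [hD, Finset.card_image_of_injOn hP]

lemma count_pat_fst (P : Finset (Fin K × Fin K)) (hP : Set.InjOn (Prod.snd : Fin K × Fin K → Fin K) ↑P)
    (i' : Fin K → Fin n) :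
    ((injTuples n K).filter (fun i => pat i i' = P)).card ≤ n ^ (K - P.card) := by
  classical
  set D := P.image Prod.snd with hD
  let w : Fin K → Fin n := fun t => if h : ∃ s, (s, t) ∈ P then i' h.choose else i' t
  have hsub : (injTuples n K).filter (fun i => pat i i' = P) ⊆
      Finset.univ.filter (fun x => ∀ t ∈ D, x t = w t) := by
    intro x hx
    rw [Finset.mem_filter] at hx ⊢
    refine ⟨Finset.mem_univ _, fun t ht => ?_⟩
    obtain ⟨st, hst, rfl⟩ := Finset.mem_image.1 ht
    have hex : ∃ s, (s, st.2) ∈ P := ⟨st.1, hst⟩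
    have hch : (hex.choose, st.2) ∈ P := hex.choose_spec
    have hiff : ∀ q : Fin K × Fin K, q ∈ pat x i' ↔ q ∈ P := fun q => by rw [hx.2]
    have hch2 := mem_pat_iff.1 ((hiff _).2 hch)
    simp only [w, dif_pos hex]
    exact hch2.symm
  calc ((injTuples n K).filter (fun i => pat i i' = P)).card
      ≤ _ := Finset.card_le_card hsub
    _ ≤ n ^ (K - D.card) := count_fixed D w
    _ = n ^ (K - P.card) := by rw [hD, Finset.card_image_of_injOn hP]


variable {n K : ℕ}

lemma card_inter_eq {i i' : Fin K → Fin n} (hi : Function.Injective i)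
    (hi' : Function.Injective i') :
    ((Finset.univ.image i) ∩ (Finset.univ.image i')).card = (pat i i').card := by
  classical
  have hset : (Finset.univ.image i) ∩ (Finset.univ.image i')
      = (pat i i').image (fun st => i' st.1) := by
    ext x
    simp only [Finset.mem_inter, Finset.mem_image, Finset.mem_univ, true_and]
    constructor
    · rintro ⟨⟨t, rfl⟩, ⟨s, hs⟩⟩
      exact ⟨(s, t), mem_pat_iff.2 hs, hs⟩
    · rintro ⟨st, hst, rfl⟩
      have := mem_pat_iff.1 hst
      exact ⟨⟨st.2, this.symm⟩, ⟨st.1, rfl⟩⟩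
  rw [hset]
  apply Finset.card_image_of_injOn
  intro a ha b hb hab
  exact pat_injOn_fst hi ha hb (hi' hab)

lemma card_union_eq {i i' : Fin K → Fin n} (hi : Function.Injective i)
    (hi' : Function.Injective i') :
    ((Finset.univ.image i) ∪ (Finset.univ.image i')).card + (pat i i').card = 2 * K := by
  classical
  have h := Finset.card_union_add_card_inter (Finset.univ.image i) (Finset.univ.image i')
  rw [card_inter_eq hi hi'] at h
  rw [h, Finset.card_image_of_injective _ hi, Finset.card_image_of_injective _ hi',
    Finset.card_univ, Fintype.card_fin]
  ring

lemma descFactorial_le_pairSet_card {i i' : Fin K → Fin n} (hi : Function.Injective i)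
    (hi' : Function.Injective i') :
    n.descFactorial ((Finset.univ.image i ∪ Finset.univ.image i').card)
      ≤ (pairSet n K i i').card := by
  classical
  set U := Finset.univ.image i ∪ Finset.univ.image i' with hU
  have hiU : ∀ s, i s ∈ U :=
    fun s => Finset.mem_union_left _ (Finset.mem_image_of_mem _ (Finset.mem_univ s))
  have hi'U : ∀ s, i' s ∈ U :=
    fun s => Finset.mem_union_right _ (Finset.mem_image_of_mem _ (Finset.mem_univ s))
  have key : Fintype.card ({x // x ∈ U} ↪ Fin n) ≤ (pairSet n K i i').card := by
    rw [← Finset.card_univ]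
    apply Finset.card_le_card_of_injOn
      (fun g => ((fun s => g ⟨i s, hiU s⟩), (fun s => g ⟨i' s, hi'U s⟩)))
    · intro g _
      rw [Finset.mem_coe, mem_pairSet_iff]
      refine ⟨mem_injTuples.2 ?_, mem_injTuples.2 ?_, ?_⟩
      · intro a b hab
        exact hi (congrArg Subtype.val (g.injective hab))
      · intro a b hab
        exact hi' (congrArg Subtype.val (g.injective hab))
      · ext st
        rw [mem_pat_iff, mem_pat_iff]
        simp only
        constructor
        · intro h
          have := congrArg Subtype.val (g.injective h)
          simpa using this
        · intro h
          congr 1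
          exact Subtype.ext h
    · intro g1 _ g2 _ heq
      have h1 : ∀ s, g1 ⟨i s, hiU s⟩ = g2 ⟨i s, hiU s⟩ :=
        fun s => congrFun (congrArg Prod.fst heq) s
      have h2 : ∀ s, g1 ⟨i' s, hi'U s⟩ = g2 ⟨i' s, hi'U s⟩ :=
        fun s => congrFun (congrArg Prod.snd heq) s
      apply Function.Embedding.ext
      rintro ⟨x, hx⟩
      rcases Finset.mem_union.1 hx with hx' | hx'
      · obtain ⟨s, -, rfl⟩ := Finset.mem_image.1 hx'
        exact h1 s
      · obtain ⟨s, -, rfl⟩ := Finset.mem_image.1 hx'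
        exact h2 s
  calc n.descFactorial U.card
      = Fintype.card ({x // x ∈ U} ↪ Fin n) := by
        rw [Fintype.card_embedding_eq, Fintype.card_coe, Fintype.card_fin]
    _ ≤ _ := key

lemma pow_le_mul_descFactorial (hn : 2*K ≤ n) :
    ∀ m, m ≤ 2*K → n ^ m ≤ (2*K) ^ m * n.descFactorial m := by
  intro m
  induction m with
  | zero => simp
  | succ m ih =>
    intro hm
    have hm' : m ≤ 2*K := le_of_lt (Nat.lt_of_succ_le hm)
    have hfact : n ≤ 2*K*(n-m) := by
      have hb : 2*K*m ≤ n*m := Nat.mul_le_mul_right m hn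
      have hc : n*(m+1) ≤ n*(2*K) := Nat.mul_le_mul_left n hm
      have hd : 2*K*(n-m) = 2*K*n - 2*K*m := Nat.mul_sub (2*K) n m
      have he : n*(2*K) = 2*K*n := Nat.mul_comm _ _
      have hf : n*(m+1) = n*m + n := by ring
      omega
    calc n ^ (m+1) = n ^ m * n := by ring
      _ ≤ ((2*K) ^ m * n.descFactorial m) * (2*K*(n-m)) :=
          Nat.mul_le_mul (ih hm') hfact
      _ = (2*K) ^ (m+1) * ((n - m) * n.descFactorial m) := by ring
      _ = (2*K) ^ (m+1) * n.descFactorial (m+1) := by rw [Nat.descFactorial_succ]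


variable {n K : ℕ}

/-- Key lower bound: `n^(2K - r) ≤ (2K)^(2K) * |pairSet i i'|`. -/
lemma pairSet_card_lower (hK : 1 ≤ K) (hn : 2*K ≤ n) {i i' : Fin K → Fin n}
    (hi : Function.Injective i) (hi' : Function.Injective i') :
    n ^ (2*K - (pat i i').card) ≤ (2*K) ^ (2*K) * (pairSet n K i i').card := by
  classical
  set U := Finset.univ.image i ∪ Finset.univ.image i' with hU
  have hcard : U.card + (pat i i').card = 2*K := card_union_eq hi hi'
  have hUcard : U.card = 2*K - (pat i i').card := by omega
  have hUle : U.card ≤ 2*K := by omega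
  calc n ^ (2*K - (pat i i').card) = n ^ U.card := by rw [hUcard]
    _ ≤ (2*K) ^ U.card * n.descFactorial U.card := pow_le_mul_descFactorial hn _ hUle
    _ ≤ (2*K) ^ (2*K) * (pairSet n K i i').card :=
        Nat.mul_le_mul (Nat.pow_le_pow_right (by omega) hUle)
          (descFactorial_le_pairSet_card hi hi')

lemma quad_bound (e : (Fin K → Fin n) → (Fin K → Fin n) → ℝ)
    (A B : Finset ((Fin K → Fin n) × (Fin K → Fin n)))
    (hA : A ⊆ (injTuples n K) ×ˢ (injTuples n K))
    (hB : B ⊆ (injTuples n K) ×ˢ (injTuples n K))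
    (N₁ N₂ : ℕ)
    (h1 : ∀ u : (Fin K → Fin n) × (Fin K → Fin n),
      ((A ×ˢ B).filter (fun q => (q.1.1, q.2.1) = u)).card ≤ N₁)
    (h2 : ∀ u : (Fin K → Fin n) × (Fin K → Fin n),
      ((A ×ˢ B).filter (fun q => (q.1.2, q.2.2) = u)).card ≤ N₂) :
    ∑ x ∈ A, ∑ y ∈ B, |e x.1 y.1| * |e x.2 y.2| ≤
      (((N₁ : ℝ) + N₂)/2) * ∑ i ∈ injTuples n K, ∑ j ∈ injTuples n K, e i j ^ 2 := by
  classical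
  set T2 := (injTuples n K) ×ˢ (injTuples n K) with hT2
  set S := ∑ i ∈ injTuples n K, ∑ j ∈ injTuples n K, e i j ^ 2 with hS
  have hSprod : S = ∑ p ∈ T2, e p.1 p.2 ^ 2 := (Finset.sum_product' _ _ _).symm
  have key : ∀ (g : ((Fin K → Fin n) × (Fin K → Fin n)) ×
        ((Fin K → Fin n) × (Fin K → Fin n)) → (Fin K → Fin n) × (Fin K → Fin n))
      (N : ℕ), (∀ u, ((A ×ˢ B).filter (fun q => g q = u)).card ≤ N) →
      (∀ q ∈ A ×ˢ B, g q ∈ T2) →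
      ∑ q ∈ A ×ˢ B, e (g q).1 (g q).2 ^ 2 ≤ (N : ℝ) * S := by
    intro g N hN hmaps
    rw [Finset.sum_comp (fun p => e p.1 p.2 ^ 2) g]
    have hsub : (A ×ˢ B).image g ⊆ T2 := by
      intro p hp
      obtain ⟨q, hq, rfl⟩ := Finset.mem_image.1 hp
      exact hmaps q hq
    calc ∑ p ∈ (A ×ˢ B).image g, ((A ×ˢ B).filter (fun q => g q = p)).card • (e p.1 p.2 ^ 2)
        ≤ ∑ p ∈ (A ×ˢ B).image g, (N : ℝ) * (e p.1 p.2 ^ 2) := by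
          apply Finset.sum_le_sum
          intro p _
          rw [nsmul_eq_mul]
          exact mul_le_mul_of_nonneg_right (by exact_mod_cast hN p) (sq_nonneg _)
      _ = (N : ℝ) * ∑ p ∈ (A ×ˢ B).image g, e p.1 p.2 ^ 2 := by rw [Finset.mul_sum]
      _ ≤ (N : ℝ) * ∑ p ∈ T2, e p.1 p.2 ^ 2 := by
          apply mul_le_mul_of_nonneg_left _ (Nat.cast_nonneg N)
          exact Finset.sum_le_sum_of_subset_of_nonneg hsub (fun p _ _ => sq_nonneg _)
      _ = (N : ℝ) * S := by rw [hSprod]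
  have hmaps1 : ∀ q ∈ A ×ˢ B, ((q.1.1, q.2.1) : _ × _) ∈ T2 := by
    intro q hq
    rw [Finset.mem_product] at hq
    have hq1 := Finset.mem_product.1 (hA hq.1)
    have hq2 := Finset.mem_product.1 (hB hq.2)
    exact Finset.mem_product.2 ⟨hq1.1, hq2.1⟩
  have hmaps2 : ∀ q ∈ A ×ˢ B, ((q.1.2, q.2.2) : _ × _) ∈ T2 := by
    intro q hq
    rw [Finset.mem_product] at hq
    have hq1 := Finset.mem_product.1 (hA hq.1)
    have hq2 := Finset.mem_product.1 (hB hq.2)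
    exact Finset.mem_product.2 ⟨hq1.2, hq2.2⟩
  have k1 := key (fun q => (q.1.1, q.2.1)) N₁ h1 hmaps1
  have k2 := key (fun q => (q.1.2, q.2.2)) N₂ h2 hmaps2
  calc ∑ x ∈ A, ∑ y ∈ B, |e x.1 y.1| * |e x.2 y.2|
      = ∑ q ∈ A ×ˢ B, |e q.1.1 q.2.1| * |e q.1.2 q.2.2| := by
        rw [Finset.sum_product]
    _ ≤ ∑ q ∈ A ×ˢ B, (e q.1.1 q.2.1 ^ 2 / 2 + e q.1.2 q.2.2 ^ 2 / 2) := by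
        apply Finset.sum_le_sum
        intro q _
        nlinarith [sq_nonneg (|e q.1.1 q.2.1| - |e q.1.2 q.2.2|), sq_abs (e q.1.1 q.2.1),
          sq_abs (e q.1.2 q.2.2), abs_nonneg (e q.1.1 q.2.1), abs_nonneg (e q.1.2 q.2.2)]
    _ = (∑ q ∈ A ×ˢ B, e q.1.1 q.2.1 ^ 2) / 2 + (∑ q ∈ A ×ˢ B, e q.1.2 q.2.2 ^ 2) / 2 := by
        rw [Finset.sum_add_distrib, Finset.sum_div, Finset.sum_div]
    _ ≤ ((N₁ : ℝ) * S) / 2 + ((N₂ : ℝ) * S) / 2 := by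
        have k1' : ∑ q ∈ A ×ˢ B, e q.1.1 q.2.1 ^ 2 ≤ (N₁:ℝ) * S := k1
        have k2' : ∑ q ∈ A ×ˢ B, e q.1.2 q.2.2 ^ 2 ≤ (N₂:ℝ) * S := k2
        linarith
    _ = (((N₁ : ℝ) + N₂)/2) * S := by ring


variable {n K : ℕ}

lemma sum_pow_neg_one {α : Type*} [DecidableEq α] (s : Finset α) :
    ∑ F ∈ s.powerset, (-1:ℝ)^F.card = if s = ∅ then 1 else 0 := by
  have h := Finset.sum_powerset_neg_one_pow_card (x := s)
  have h2 := congrArg (fun z : ℤ => (z : ℝ)) h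
  push_cast at h2
  simpa using h2

lemma count_single (s₀ : Fin K) (w : Fin n) :
    ((injTuples n K).filter (fun x => x s₀ = w)).card ≤ n ^ (K - 1) := by
  classical
  have hsub : (injTuples n K).filter (fun x => x s₀ = w) ⊆
      Finset.univ.filter (fun x => ∀ s ∈ ({s₀} : Finset (Fin K)), x s = (fun _ => w) s) := by
    intro x hx
    rw [Finset.mem_filter] at hx ⊢
    refine ⟨Finset.mem_univ _, fun s hs => ?_⟩
    rw [Finset.mem_singleton] at hs
    subst hs
    exact hx.2
  calc ((injTuples n K).filter (fun x => x s₀ = w)).card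
      ≤ _ := Finset.card_le_card hsub
    _ ≤ n ^ (K - ({s₀} : Finset (Fin K)).card) := count_fixed _ _
    _ = n ^ (K - 1) := by rw [Finset.card_singleton]

lemma card_injTuples_le : (injTuples n K).card ≤ n ^ K := by
  rw [card_injTuples]; exact Nat.descFactorial_le_pow n K

lemma fiber_le_prod {α : Type*} [DecidableEq α] (A B : Finset (α × α)) (u : α × α)
    (C D : Finset α) (hC : ∀ p ∈ A, p.1 = u.1 → p.2 ∈ C)
    (hD : ∀ p ∈ B, p.1 = u.2 → p.2 ∈ D) :
    ((A ×ˢ B).filter (fun q => (q.1.1, q.2.1) = u)).card ≤ C.card * D.card := by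
  classical
  rw [← Finset.card_product]
  apply Finset.card_le_card_of_injOn (fun q => (q.1.2, q.2.2))
  · intro q hq
    rw [Finset.mem_coe, Finset.mem_filter, Finset.mem_product] at hq
    obtain ⟨⟨hqA, hqB⟩, hu⟩ := hq
    rw [Prod.ext_iff] at hu
    exact Finset.mem_product.2 ⟨hC q.1 hqA hu.1, hD q.2 hqB hu.2⟩
  · intro a ha b hb hab
    rw [Finset.mem_coe, Finset.mem_filter] at ha hb
    rw [Prod.ext_iff] at hab ha hb
    obtain ⟨h1, h2⟩ := hab
    have e1 : a.1 = b.1 := Prod.ext (ha.2.1.trans hb.2.1.symm) h1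
    have e2 : a.2 = b.2 := Prod.ext (ha.2.2.trans hb.2.2.symm) h2
    exact Prod.ext e1 e2
  
lemma fiber_le_prod' {α : Type*} [DecidableEq α] (A B : Finset (α × α)) (u : α × α)
    (C D : Finset α) (hC : ∀ p ∈ A, p.2 = u.1 → p.1 ∈ C)
    (hD : ∀ p ∈ B, p.2 = u.2 → p.1 ∈ D) :
    ((A ×ˢ B).filter (fun q => (q.1.2, q.2.2) = u)).card ≤ C.card * D.card := by
  classical
  rw [← Finset.card_product]
  apply Finset.card_le_card_of_injOn (fun q => (q.1.1, q.2.1))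
  · intro q hq
    rw [Finset.mem_coe, Finset.mem_filter, Finset.mem_product] at hq
    obtain ⟨⟨hqA, hqB⟩, hu⟩ := hq
    rw [Prod.ext_iff] at hu
    exact Finset.mem_product.2 ⟨hC q.1 hqA hu.1, hD q.2 hqB hu.2⟩
  · intro a ha b hb hab
    rw [Finset.mem_coe, Finset.mem_filter] at ha hb
    rw [Prod.ext_iff] at hab ha hb
    obtain ⟨h1, h2⟩ := hab
    have e1 : a.1 = b.1 := Prod.ext h1 (ha.2.1.trans hb.2.1.symm)
    have e2 : a.2 = b.2 := Prod.ext h2 (ha.2.2.trans hb.2.2.symm)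
    exact Prod.ext e1 e2


variable {n K : ℕ}

lemma pairSet_eq_filter {q : (Fin K → Fin n) × (Fin K → Fin n)} :
    pairSet n K q.1 q.2 =
      ((injTuples n K) ×ˢ (injTuples n K)).filter
        (fun p => pat p.1 p.2 = pat q.1 q.2) := by
  ext p
  rw [mem_pairSet_iff, Finset.mem_filter, Finset.mem_product]
  tauto

lemma class_bound_overlap (hK : 1 ≤ K) (hn : 2*K ≤ n)
    (e : (Fin K → Fin n) → (Fin K → Fin n) → ℝ)
    (P : Finset (Fin K × Fin K)) (hPne : P.Nonempty)
    (hP1 : Set.InjOn (Prod.fst : Fin K × Fin K → Fin K) ↑P)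
    (hP2 : Set.InjOn (Prod.snd : Fin K × Fin K → Fin K) ↑P)
    (hPK : P.card ≤ K) :
    ∑ q ∈ ((injTuples n K) ×ˢ (injTuples n K)).filter (fun q => pat q.1 q.2 = P),
      |((pairSet n K q.1 q.2).card : ℝ)⁻¹ *
        ∑ p ∈ pairSet n K q.1 q.2, e q.1 p.1 * e q.2 p.2| ≤
      ((2*K : ℝ)) ^ (2*K) / n *
        ∑ i ∈ injTuples n K, ∑ j ∈ injTuples n K, e i j ^ 2 := by
  classical
  set T2 := (injTuples n K) ×ˢ (injTuples n K) with hT2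
  set AP := T2.filter (fun q => pat q.1 q.2 = P) with hAP
  set S := ∑ i ∈ injTuples n K, ∑ j ∈ injTuples n K, e i j ^ 2 with hS
  have hS0 : 0 ≤ S := Finset.sum_nonneg fun i _ => Finset.sum_nonneg fun j _ => sq_nonneg _
  have hn0 : 0 < n := by omega
  have hps : ∀ q ∈ AP, pairSet n K q.1 q.2 = AP := by
    intro q hq
    rw [hAP, Finset.mem_filter] at hq
    rw [pairSet_eq_filter, hq.2, hAP]
  rcases Finset.eq_empty_or_nonempty AP with hAPe | ⟨q₀, hq₀⟩
  · rw [hAPe, Finset.sum_empty]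
    positivity
  -- M is constant on the class
  set M := AP.card with hM
  have hM0 : 0 < M := Finset.card_pos.2 ⟨q₀, hq₀⟩
  set r := P.card with hr
  have hr1 : 1 ≤ r := Finset.card_pos.2 hPne
  set N := n ^ (K - r) * n ^ (K - r) with hN
  -- quad bound
  have hsubT2 : AP ⊆ T2 := Finset.filter_subset _ _
  have hquad : ∑ x ∈ AP, ∑ y ∈ AP, |e x.1 y.1| * |e x.2 y.2| ≤
      (((N : ℝ) + N)/2) * S := by
    apply quad_bound e AP AP hsubT2 hsubT2 N N
    · intro u
      have hfib := fiber_le_prod AP AP u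
        ((injTuples n K).filter (fun i' => pat u.1 i' = P))
        ((injTuples n K).filter (fun j' => pat u.2 j' = P))
        ?_ ?_
      · refine hfib.trans ?_
        exact Nat.mul_le_mul (count_pat_snd P hP1 u.1) (count_pat_snd P hP1 u.2)
      · intro p hp hp1
        rw [hAP, Finset.mem_filter, hT2, Finset.mem_product] at hp
        rw [Finset.mem_filter]
        exact ⟨hp.1.2, by rw [← hp1]; exact hp.2⟩
      · intro p hp hp1
        rw [hAP, Finset.mem_filter, hT2, Finset.mem_product] at hp
        rw [Finset.mem_filter]
        exact ⟨hp.1.2, by rw [← hp1]; exact hp.2⟩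
    · intro u
      have hfib := fiber_le_prod' AP AP u
        ((injTuples n K).filter (fun i => pat i u.1 = P))
        ((injTuples n K).filter (fun j => pat j u.2 = P))
        ?_ ?_
      · refine hfib.trans ?_
        exact Nat.mul_le_mul (count_pat_fst P hP2 u.1) (count_pat_fst P hP2 u.2)
      · intro p hp hp1
        rw [hAP, Finset.mem_filter, hT2, Finset.mem_product] at hp
        rw [Finset.mem_filter]
        exact ⟨hp.1.1, by rw [← hp1]; exact hp.2⟩
      · intro p hp hp1
        rw [hAP, Finset.mem_filter, hT2, Finset.mem_product] at hp
        rw [Finset.mem_filter]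
        exact ⟨hp.1.1, by rw [← hp1]; exact hp.2⟩
  -- bound each |G q|
  have habs : ∀ q ∈ AP,
      |((pairSet n K q.1 q.2).card : ℝ)⁻¹ *
        ∑ p ∈ pairSet n K q.1 q.2, e q.1 p.1 * e q.2 p.2| ≤
      (M : ℝ)⁻¹ * ∑ p ∈ AP, |e q.1 p.1| * |e q.2 p.2| := by
    intro q hq
    rw [hps q hq, abs_mul, abs_inv, Nat.abs_cast]
    apply mul_le_mul_of_nonneg_left _ (by positivity)
    exact (Finset.abs_sum_le_sum_abs _ _).trans
      (le_of_eq (Finset.sum_congr rfl fun p _ => abs_mul _ _))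
  have hsum1 : ∑ q ∈ AP,
      |((pairSet n K q.1 q.2).card : ℝ)⁻¹ *
        ∑ p ∈ pairSet n K q.1 q.2, e q.1 p.1 * e q.2 p.2| ≤
      (M : ℝ)⁻¹ * ((((N : ℝ) + N)/2) * S) := by
    calc ∑ q ∈ AP, |((pairSet n K q.1 q.2).card : ℝ)⁻¹ *
          ∑ p ∈ pairSet n K q.1 q.2, e q.1 p.1 * e q.2 p.2|
        ≤ ∑ q ∈ AP, (M : ℝ)⁻¹ * ∑ p ∈ AP, |e q.1 p.1| * |e q.2 p.2| :=
          Finset.sum_le_sum habs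
      _ = (M : ℝ)⁻¹ * ∑ q ∈ AP, ∑ p ∈ AP, |e q.1 p.1| * |e q.2 p.2| := by
          rw [Finset.mul_sum]
      _ ≤ (M : ℝ)⁻¹ * ((((N : ℝ) + N)/2) * S) := by
          apply mul_le_mul_of_nonneg_left hquad (by positivity)
  refine hsum1.trans ?_
  -- key: N * n ≤ (2K)^(2K) * M
  have hkey : (N : ℝ) * n ≤ ((2*K : ℝ)) ^ (2*K) * M := by
    have h1 : N * n ≤ N * n ^ r :=
      Nat.mul_le_mul_left N (Nat.le_self_pow (by omega) n)
    have h2 : N * n ^ r = n ^ (2*K - r) := by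
      rw [hN, ← pow_add, ← pow_add]
      congr 1
      omega
    have h3 : n ^ (2*K - r) ≤ (2*K) ^ (2*K) * (pairSet n K q₀.1 q₀.2).card := by
      have hq₀' := hq₀
      rw [hAP, Finset.mem_filter, hT2, Finset.mem_product] at hq₀'
      have := pairSet_card_lower hK hn (mem_injTuples.1 hq₀'.1.1) (mem_injTuples.1 hq₀'.1.2)
      rw [hq₀'.2] at this
      exact this
    have h4 : (pairSet n K q₀.1 q₀.2).card = M := by rw [hps q₀ hq₀]
    have h5 : N * n ≤ (2*K) ^ (2*K) * M := by
      rw [← h4]; omega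
    exact_mod_cast h5
  have hMpos : (0:ℝ) < M := by exact_mod_cast hM0
  have hnpos : (0:ℝ) < n := by exact_mod_cast hn0
  have heq : (M : ℝ)⁻¹ * ((((N : ℝ) + N)/2) * S) = ((N : ℝ)/M) * S := by
    field_simp
    ring
  rw [heq]
  apply mul_le_mul_of_nonneg_right _ hS0
  rw [div_le_div_iff₀ hMpos hnpos]
  exact hkey


variable {n K : ℕ}

lemma overlap_total_bound (hK : 1 ≤ K) (hn : 2*K ≤ n)
    (e : (Fin K → Fin n) → (Fin K → Fin n) → ℝ) :
    ∑ q ∈ ((injTuples n K) ×ˢ (injTuples n K)).filter (fun q => pat q.1 q.2 ≠ ∅),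
      |((pairSet n K q.1 q.2).card : ℝ)⁻¹ *
        ∑ p ∈ pairSet n K q.1 q.2, e q.1 p.1 * e q.2 p.2| ≤
      (2:ℝ)^(K*K) * (((2*K : ℝ)) ^ (2*K) / n *
        ∑ i ∈ injTuples n K, ∑ j ∈ injTuples n K, e i j ^ 2) := by
  classical
  set T2 := (injTuples n K) ×ˢ (injTuples n K) with hT2
  set S := ∑ i ∈ injTuples n K, ∑ j ∈ injTuples n K, e i j ^ 2 with hS
  have hS0 : 0 ≤ S := Finset.sum_nonneg fun i _ => Finset.sum_nonneg fun j _ => sq_nonneg _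
  have hn0 : 0 < n := by omega
  set Dov := T2.filter (fun q => pat q.1 q.2 ≠ ∅) with hDov
  set G := fun q : (Fin K → Fin n) × (Fin K → Fin n) =>
    |((pairSet n K q.1 q.2).card : ℝ)⁻¹ *
      ∑ p ∈ pairSet n K q.1 q.2, e q.1 p.1 * e q.2 p.2| with hG
  have hfib := Finset.sum_fiberwise_of_maps_to
    (s := Dov) (t := Dov.image (fun q => pat q.1 q.2))
    (g := fun q => pat q.1 q.2)
    (fun q hq => Finset.mem_image_of_mem _ hq) G
  rw [← hfib]
  have hclass : ∀ P ∈ Dov.image (fun q => pat q.1 q.2),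
      ∑ q ∈ Dov.filter (fun q => pat q.1 q.2 = P), G q ≤
        ((2*K : ℝ)) ^ (2*K) / n * S := by
    intro P hP
    obtain ⟨q₁, hq₁, rfl⟩ := Finset.mem_image.1 hP
    rw [hDov, Finset.mem_filter] at hq₁
    obtain ⟨hq₁T, hq₁ne⟩ := hq₁
    rw [hT2, Finset.mem_product] at hq₁T
    have hi1 := mem_injTuples.1 hq₁T.1
    have hi2 := mem_injTuples.1 hq₁T.2
    have hfilter_eq : Dov.filter (fun q => pat q.1 q.2 = pat q₁.1 q₁.2) =
        T2.filter (fun q => pat q.1 q.2 = pat q₁.1 q₁.2) := by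
      rw [hDov, Finset.filter_filter]
      apply Finset.filter_congr
      intro q _
      constructor
      · rintro ⟨-, h2⟩; exact h2
      · intro h2; exact ⟨by rw [h2]; exact hq₁ne, h2⟩
    rw [hfilter_eq]
    have hP1 := pat_injOn_fst (i := q₁.1) (i' := q₁.2) hi1
    have hP2 := pat_injOn_snd (i := q₁.1) (i' := q₁.2) hi2
    have hPK : (pat q₁.1 q₁.2).card ≤ K := by
      rw [← Finset.card_image_of_injOn hP1]
      calc ((pat q₁.1 q₁.2).image Prod.fst).card ≤ Fintype.card (Fin K) :=
            Finset.card_le_univ _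
        _ = K := Fintype.card_fin K
    exact class_bound_overlap hK hn e (pat q₁.1 q₁.2)
      (Finset.nonempty_iff_ne_empty.2 hq₁ne) hP1 hP2 hPK
  calc ∑ P ∈ Dov.image (fun q => pat q.1 q.2),
        ∑ q ∈ Dov.filter (fun q => pat q.1 q.2 = P), G q
      ≤ ∑ P ∈ Dov.image (fun q => pat q.1 q.2), ((2*K : ℝ)) ^ (2*K) / n * S :=
        Finset.sum_le_sum hclass
    _ = ((Dov.image (fun q => pat q.1 q.2)).card : ℝ) * (((2*K : ℝ)) ^ (2*K) / n * S) := by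
        rw [Finset.sum_const, nsmul_eq_mul]
    _ ≤ (2:ℝ)^(K*K) * (((2*K : ℝ)) ^ (2*K) / n * S) := by
        apply mul_le_mul_of_nonneg_right _ (by positivity)
        have h1 : (Dov.image (fun q => pat q.1 q.2)).card ≤ 2^(K*K) := by
          calc (Dov.image (fun q => pat q.1 q.2)).card
              ≤ Fintype.card (Finset (Fin K × Fin K)) := Finset.card_le_univ _
            _ = 2 ^ (Fintype.card (Fin K × Fin K)) := Fintype.card_finset
            _ = 2 ^ (K*K) := by rw [Fintype.card_prod, Fintype.card_fin]
        calc ((Dov.image (fun q => pat q.1 q.2)).card : ℝ) ≤ ((2^(K*K) : ℕ) : ℝ) := by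
              exact_mod_cast h1
          _ = (2:ℝ)^(K*K) := by push_cast; ring


variable {n K : ℕ}

lemma inner_ie (e : (Fin K → Fin n) → (Fin K → Fin n) → ℝ)
    (hrow : ∀ i, ∑ j ∈ injTuples n K, e i j = 0) (i i' : Fin K → Fin n) :
    ∑ p ∈ ((injTuples n K) ×ˢ (injTuples n K)).filter (fun p => pat p.1 p.2 = ∅),
      e i p.1 * e i' p.2 =
    ∑ F ∈ (Finset.univ : Finset (Finset (Fin K × Fin K))).erase ∅,
      (-1:ℝ)^F.card *
        ∑ p ∈ ((injTuples n K) ×ˢ (injTuples n K)).filter (fun p => F ⊆ pat p.1 p.2),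
          e i p.1 * e i' p.2 := by
  classical
  set T2 := (injTuples n K) ×ˢ (injTuples n K) with hT2
  have step1 : ∑ p ∈ T2.filter (fun p => pat p.1 p.2 = ∅), e i p.1 * e i' p.2
      = ∑ p ∈ T2, (if pat p.1 p.2 = ∅ then (1:ℝ) else 0) * (e i p.1 * e i' p.2) := by
    rw [Finset.sum_filter]
    refine Finset.sum_congr rfl fun p _ => ?_
    by_cases h : pat p.1 p.2 = ∅ <;> simp [h]
  have step2 : ∀ p : (Fin K → Fin n) × (Fin K → Fin n),
      (if pat p.1 p.2 = ∅ then (1:ℝ) else 0)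
        = ∑ F ∈ (Finset.univ : Finset (Finset (Fin K × Fin K))),
            (if F ⊆ pat p.1 p.2 then (-1:ℝ)^F.card else 0) := by
    intro p
    rw [← sum_pow_neg_one (pat p.1 p.2)]
    rw [show (pat p.1 p.2).powerset
        = (Finset.univ : Finset (Finset (Fin K × Fin K))).filter
            (fun F => F ⊆ pat p.1 p.2) by
      ext F
      simp [Finset.mem_powerset]]
    rw [Finset.sum_filter]
  rw [step1]
  have step2' : ∑ p ∈ T2, (if pat p.1 p.2 = ∅ then (1:ℝ) else 0) * (e i p.1 * e i' p.2)
      = ∑ p ∈ T2, (∑ F ∈ (Finset.univ : Finset (Finset (Fin K × Fin K))),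
          (if F ⊆ pat p.1 p.2 then (-1:ℝ)^F.card else 0)) * (e i p.1 * e i' p.2) :=
    Finset.sum_congr rfl fun p _ => by rw [step2 p]
  rw [step2']
  have step3 : ∑ p ∈ T2, (∑ F ∈ (Finset.univ : Finset (Finset (Fin K × Fin K))),
        (if F ⊆ pat p.1 p.2 then (-1:ℝ)^F.card else 0)) * (e i p.1 * e i' p.2)
      = ∑ F ∈ (Finset.univ : Finset (Finset (Fin K × Fin K))),
          (-1:ℝ)^F.card *
            ∑ p ∈ T2.filter (fun p => F ⊆ pat p.1 p.2), e i p.1 * e i' p.2 := by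
    simp only [Finset.sum_mul]
    rw [Finset.sum_comm]
    refine Finset.sum_congr rfl fun F _ => ?_
    simp only [ite_mul, zero_mul]
    rw [← Finset.sum_filter]
    rw [Finset.mul_sum]
  rw [step3]
  rw [← Finset.add_sum_erase _ _ (Finset.mem_univ (∅ : Finset (Fin K × Fin K)))]
  have hzero : (-1:ℝ)^(∅ : Finset (Fin K × Fin K)).card *
      ∑ p ∈ T2.filter (fun p => (∅ : Finset (Fin K × Fin K)) ⊆ pat p.1 p.2),
        e i p.1 * e i' p.2 = 0 := by
    have hfil : T2.filter (fun p => (∅ : Finset (Fin K × Fin K)) ⊆ pat p.1 p.2) = T2 :=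
      Finset.filter_true_of_mem (fun p _ => Finset.empty_subset _)
    rw [hfil, Finset.card_empty, pow_zero, one_mul]
    have hprod : ∑ p ∈ T2, e i p.1 * e i' p.2
        = (∑ x ∈ injTuples n K, e i x) * (∑ y ∈ injTuples n K, e i' y) := by
      rw [Finset.sum_mul_sum, hT2]
      exact Finset.sum_product _ _ _
    rw [hprod, hrow i, zero_mul]
  rw [hzero, zero_add]

lemma disjoint_total_bound (hK : 1 ≤ K) (hn : 2*K ≤ n)
    (e : (Fin K → Fin n) → (Fin K → Fin n) → ℝ)
    (hrow : ∀ i, ∑ j ∈ injTuples n K, e i j = 0) :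
    ∑ q ∈ ((injTuples n K) ×ˢ (injTuples n K)).filter (fun q => pat q.1 q.2 = ∅),
      |((pairSet n K q.1 q.2).card : ℝ)⁻¹ *
        ∑ p ∈ pairSet n K q.1 q.2, e q.1 p.1 * e q.2 p.2| ≤
      (2:ℝ)^(K*K) * (((2*K : ℝ)) ^ (2*K) / n *
        ∑ i ∈ injTuples n K, ∑ j ∈ injTuples n K, e i j ^ 2) := by
  classical
  set T2 := (injTuples n K) ×ˢ (injTuples n K) with hT2
  set S := ∑ i ∈ injTuples n K, ∑ j ∈ injTuples n K, e i j ^ 2 with hS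
  have hS0 : 0 ≤ S := Finset.sum_nonneg fun i _ => Finset.sum_nonneg fun j _ => sq_nonneg _
  have hn0 : 0 < n := by omega
  set Dd := T2.filter (fun q => pat q.1 q.2 = ∅) with hDd
  rcases Finset.eq_empty_or_nonempty Dd with hDde | ⟨q₀, hq₀⟩
  · rw [hDde, Finset.sum_empty]
    positivity
  have hps : ∀ q ∈ Dd, pairSet n K q.1 q.2 = Dd := by
    intro q hq
    rw [hDd, Finset.mem_filter] at hq
    rw [pairSet_eq_filter, hq.2, hDd]
  set M := Dd.card with hM
  have hM0 : 0 < M := Finset.card_pos.2 ⟨q₀, hq₀⟩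
  set 𝔽 := (Finset.univ : Finset (Finset (Fin K × Fin K))).erase ∅ with h𝔽
  set N := (injTuples n K).card * n ^ (K - 1) with hN
  -- bound each term
  have habs : ∀ q ∈ Dd,
      |((pairSet n K q.1 q.2).card : ℝ)⁻¹ *
        ∑ p ∈ pairSet n K q.1 q.2, e q.1 p.1 * e q.2 p.2| ≤
      (M : ℝ)⁻¹ * ∑ F ∈ 𝔽, ∑ p ∈ T2.filter (fun p => F ⊆ pat p.1 p.2),
        |e q.1 p.1| * |e q.2 p.2| := by
    intro q hq
    rw [hps q hq, ← hM]
    rw [abs_mul, abs_inv, Nat.abs_cast]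
    apply mul_le_mul_of_nonneg_left _ (by positivity)
    have hqmem := hq
    rw [hDd, Finset.mem_filter] at hqmem
    have hie : ∑ p ∈ Dd, e q.1 p.1 * e q.2 p.2
        = ∑ F ∈ 𝔽, (-1:ℝ)^F.card *
            ∑ p ∈ T2.filter (fun p => F ⊆ pat p.1 p.2), e q.1 p.1 * e q.2 p.2 := by
      rw [hDd]
      exact inner_ie e hrow q.1 q.2
    rw [hie]
    calc |∑ F ∈ 𝔽, (-1:ℝ)^F.card *
          ∑ p ∈ T2.filter (fun p => F ⊆ pat p.1 p.2), e q.1 p.1 * e q.2 p.2|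
        ≤ ∑ F ∈ 𝔽, |(-1:ℝ)^F.card *
            ∑ p ∈ T2.filter (fun p => F ⊆ pat p.1 p.2), e q.1 p.1 * e q.2 p.2| :=
          Finset.abs_sum_le_sum_abs _ _
      _ ≤ ∑ F ∈ 𝔽, ∑ p ∈ T2.filter (fun p => F ⊆ pat p.1 p.2),
            |e q.1 p.1| * |e q.2 p.2| := by
          apply Finset.sum_le_sum
          intro F _
          rw [abs_mul, abs_pow, abs_neg, abs_one, one_pow, one_mul]
          exact (Finset.abs_sum_le_sum_abs _ _).trans
            (le_of_eq (Finset.sum_congr rfl fun p _ => abs_mul _ _))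
  -- sum over q and swap
  have hsum1 : ∑ q ∈ Dd,
      |((pairSet n K q.1 q.2).card : ℝ)⁻¹ *
        ∑ p ∈ pairSet n K q.1 q.2, e q.1 p.1 * e q.2 p.2| ≤
      (M : ℝ)⁻¹ * ∑ F ∈ 𝔽, ∑ q ∈ Dd, ∑ p ∈ T2.filter (fun p => F ⊆ pat p.1 p.2),
        |e q.1 p.1| * |e q.2 p.2| := by
    calc ∑ q ∈ Dd, |((pairSet n K q.1 q.2).card : ℝ)⁻¹ *
          ∑ p ∈ pairSet n K q.1 q.2, e q.1 p.1 * e q.2 p.2|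
        ≤ ∑ q ∈ Dd, (M : ℝ)⁻¹ * ∑ F ∈ 𝔽, ∑ p ∈ T2.filter (fun p => F ⊆ pat p.1 p.2),
            |e q.1 p.1| * |e q.2 p.2| := Finset.sum_le_sum habs
      _ = (M : ℝ)⁻¹ * ∑ q ∈ Dd, ∑ F ∈ 𝔽, ∑ p ∈ T2.filter (fun p => F ⊆ pat p.1 p.2),
            |e q.1 p.1| * |e q.2 p.2| := by rw [Finset.mul_sum]
      _ = (M : ℝ)⁻¹ * ∑ F ∈ 𝔽, ∑ q ∈ Dd, ∑ p ∈ T2.filter (fun p => F ⊆ pat p.1 p.2),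
            |e q.1 p.1| * |e q.2 p.2| := by rw [Finset.sum_comm]
  -- per-F quad bound
  have hquadF : ∀ F ∈ 𝔽, ∑ q ∈ Dd, ∑ p ∈ T2.filter (fun p => F ⊆ pat p.1 p.2),
      |e q.1 p.1| * |e q.2 p.2| ≤ (N : ℝ) * S := by
    intro F hF
    have hFne : F.Nonempty := Finset.nonempty_iff_ne_empty.2 (Finset.mem_erase.1 hF).1
    obtain ⟨st, hst⟩ := hFne
    have hb := quad_bound e Dd (T2.filter (fun p => F ⊆ pat p.1 p.2))
      (Finset.filter_subset _ _) (Finset.filter_subset _ _) N N ?_ ?_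
    · refine hb.trans (le_of_eq ?_)
      push_cast
      ring
    · intro u
      refine (fiber_le_prod Dd _ u (injTuples n K)
        ((injTuples n K).filter (fun j' => j' st.1 = u.2 st.2)) ?_ ?_).trans ?_
      · intro p hp _
        rw [hDd, Finset.mem_filter, hT2, Finset.mem_product] at hp
        exact hp.1.2
      · intro p hp hp1
        rw [Finset.mem_filter, hT2, Finset.mem_product] at hp
        rw [Finset.mem_filter]
        refine ⟨hp.1.2, ?_⟩
        have hmem : st ∈ pat p.1 p.2 := hp.2 hst
        rw [mem_pat_iff] at hmem
        rw [hmem, hp1]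
      · rw [hN]
        exact Nat.mul_le_mul le_rfl (count_single st.1 (u.2 st.2))
    · intro u
      refine (fiber_le_prod' Dd _ u (injTuples n K)
        ((injTuples n K).filter (fun j => j st.2 = u.2 st.1)) ?_ ?_).trans ?_
      · intro p hp _
        rw [hDd, Finset.mem_filter, hT2, Finset.mem_product] at hp
        exact hp.1.1
      · intro p hp hp2
        rw [Finset.mem_filter, hT2, Finset.mem_product] at hp
        rw [Finset.mem_filter]
        refine ⟨hp.1.1, ?_⟩
        have hmem : st ∈ pat p.1 p.2 := hp.2 hst
        rw [mem_pat_iff] at hmem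
        rw [← hmem, hp2]
      · rw [hN]
        exact Nat.mul_le_mul le_rfl (count_single st.2 (u.2 st.1))
  -- assemble
  have hcardF : (𝔽.card : ℝ) ≤ (2:ℝ)^(K*K) := by
    have h1 : 𝔽.card ≤ 2^(K*K) := by
      calc 𝔽.card ≤ Fintype.card (Finset (Fin K × Fin K)) := Finset.card_le_univ _
        _ = 2 ^ (Fintype.card (Fin K × Fin K)) := Fintype.card_finset
        _ = 2 ^ (K*K) := by rw [Fintype.card_prod, Fintype.card_fin]
    calc (𝔽.card : ℝ) ≤ ((2^(K*K) : ℕ) : ℝ) := by exact_mod_cast h1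
      _ = (2:ℝ)^(K*K) := by push_cast; ring
  have hkey : (N : ℝ) * n ≤ ((2*K : ℝ)) ^ (2*K) * M := by
    have h1 : N * n ≤ n ^ (2*K) := by
      calc N * n ≤ n^K * n^(K-1) * n :=
            Nat.mul_le_mul_right n (Nat.mul_le_mul_right _ card_injTuples_le)
        _ = n ^ (2*K) := by
            rw [mul_assoc, ← pow_succ, ← pow_add]
            congr 1
            omega
    have h3 : n ^ (2*K) ≤ (2*K) ^ (2*K) * (pairSet n K q₀.1 q₀.2).card := by
      have hq₀' := hq₀
      rw [hDd, Finset.mem_filter, hT2, Finset.mem_product] at hq₀'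
      have := pairSet_card_lower hK hn (mem_injTuples.1 hq₀'.1.1) (mem_injTuples.1 hq₀'.1.2)
      rw [hq₀'.2, Finset.card_empty, Nat.sub_zero] at this
      exact this
    have h4 : (pairSet n K q₀.1 q₀.2).card = M := by rw [hps q₀ hq₀]
    have h5 : N * n ≤ (2*K) ^ (2*K) * M := by rw [← h4]; omega
    exact_mod_cast h5
  refine hsum1.trans ?_
  have hMpos : (0:ℝ) < M := by exact_mod_cast hM0
  have hnpos : (0:ℝ) < n := by exact_mod_cast hn0
  calc (M : ℝ)⁻¹ * ∑ F ∈ 𝔽, ∑ q ∈ Dd, ∑ p ∈ T2.filter (fun p => F ⊆ pat p.1 p.2),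
        |e q.1 p.1| * |e q.2 p.2|
      ≤ (M : ℝ)⁻¹ * ∑ F ∈ 𝔽, (N : ℝ) * S := by
        apply mul_le_mul_of_nonneg_left _ (by positivity)
        exact Finset.sum_le_sum hquadF
    _ = (𝔽.card : ℝ) * (((N:ℝ)/M) * S) := by
        rw [Finset.sum_const, nsmul_eq_mul]
        field_simp
    _ ≤ (2:ℝ)^(K*K) * (((N:ℝ)/M) * S) := by
        apply mul_le_mul_of_nonneg_right hcardF
        exact mul_nonneg (div_nonneg (Nat.cast_nonneg _) (Nat.cast_nonneg _)) hS0
    _ ≤ (2:ℝ)^(K*K) * (((2*K : ℝ)) ^ (2*K) / n * S) := by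
        apply mul_le_mul_of_nonneg_left _ (by positivity)
        apply mul_le_mul_of_nonneg_right _ hS0
        rw [div_le_div_iff₀ hMpos hnpos]
        exact hkey

/-- Lemma C.7 of the paper: mean formula and variance bound for
`K`-indexed permutation statistics: `E[Γ] = (n)_K⁻¹ ΣΣ d`, and there is a constant
`C_K` depending only on `K` with
`Var(Γ) ≤ C_K n^{2K−1} (n)_K⁻² ΣΣ d̃²` for every `n ≥ 2K` and every array `d`. -/
theorem statement_16 (K : ℕ) (hK : 1 ≤ K) :
    ∃ C : ℝ, ∀ n : ℕ, 2 * K ≤ n →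
      ∀ d : (Fin K → Fin n) → (Fin K → Fin n) → ℝ,
        (permE n (gammaStat n K d) =
          (n.descFactorial K : ℝ)⁻¹ *
            ∑ i ∈ injTuples n K, ∑ j ∈ injTuples n K, d i j) ∧
        permVar n (gammaStat n K d) ≤
          C * (n : ℝ) ^ (2 * K - 1) * ((n.descFactorial K : ℝ)⁻¹) ^ 2 *
            ∑ i ∈ injTuples n K, ∑ j ∈ injTuples n K, dCenter n K d i j ^ 2 := by
  classical
  refine ⟨2 * (2:ℝ)^(K*K) * (2*K : ℝ)^(2*K), ?_⟩
  intro n hn d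
  have hnK : K ≤ n := by omega
  have hn0 : 0 < n := by omega
  refine ⟨permE_gamma hnK d, ?_⟩
  set e := dCenter n K d with he
  set S := ∑ i ∈ injTuples n K, ∑ j ∈ injTuples n K, e i j ^ 2 with hS
  have hS0 : 0 ≤ S := Finset.sum_nonneg fun i _ => Finset.sum_nonneg fun j _ => sq_nonneg _
  set T2 := (injTuples n K) ×ˢ (injTuples n K) with hT2
  set G := fun q : (Fin K → Fin n) × (Fin K → Fin n) =>
    ((pairSet n K q.1 q.2).card : ℝ)⁻¹ *
      ∑ p ∈ pairSet n K q.1 q.2, e q.1 p.1 * e q.2 p.2 with hG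
  have hvar : permVar n (gammaStat n K d) = ∑ q ∈ T2, G q := var_eq_sum_pairs hnK d
  have hsplit : ∑ q ∈ T2, G q =
      ∑ q ∈ T2.filter (fun q => pat q.1 q.2 = ∅), G q +
      ∑ q ∈ T2.filter (fun q => ¬ pat q.1 q.2 = ∅), G q :=
    (Finset.sum_filter_add_sum_filter_not T2 _ G).symm
  have hd : ∑ q ∈ T2.filter (fun q => pat q.1 q.2 = ∅), G q ≤
      (2:ℝ)^(K*K) * ((2*K:ℝ)^(2*K)/n * S) := by
    refine (Finset.sum_le_sum (fun q _ => le_abs_self (G q))).trans ?_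
    exact disjoint_total_bound hK hn e (fun i => sum_dCenter_right hnK d i)
  have hov : ∑ q ∈ T2.filter (fun q => ¬ pat q.1 q.2 = ∅), G q ≤
      (2:ℝ)^(K*K) * ((2*K:ℝ)^(2*K)/n * S) := by
    refine (Finset.sum_le_sum (fun q _ => le_abs_self (G q))).trans ?_
    exact overlap_total_bound hK hn e
  have hbound : permVar n (gammaStat n K d) ≤
      2 * (2:ℝ)^(K*K) * (2*K : ℝ)^(2*K) * ((1:ℝ)/n) * S := by
    rw [hvar, hsplit]
    calc ∑ q ∈ T2.filter (fun q => pat q.1 q.2 = ∅), G q +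
          ∑ q ∈ T2.filter (fun q => ¬ pat q.1 q.2 = ∅), G q
        ≤ (2:ℝ)^(K*K) * ((2*K:ℝ)^(2*K)/n * S) +
            (2:ℝ)^(K*K) * ((2*K:ℝ)^(2*K)/n * S) := add_le_add hd hov
      _ = 2 * (2:ℝ)^(K*K) * (2*K : ℝ)^(2*K) * ((1:ℝ)/n) * S := by ring
  refine hbound.trans ?_
  -- final comparison
  have hc : (0:ℝ) < (n.descFactorial K : ℝ) := descFactorial_pos' hnK
  have hcle : ((n.descFactorial K : ℕ) : ℝ) ≤ (n:ℝ)^K := by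
    exact_mod_cast Nat.descFactorial_le_pow n K
  have hnpos : (0:ℝ) < n := by exact_mod_cast hn0
  have hkey : (1:ℝ)/n ≤ (n : ℝ) ^ (2 * K - 1) * ((n.descFactorial K : ℝ)⁻¹) ^ 2 := by
    rw [inv_pow, ← div_eq_mul_inv]
    rw [div_le_div_iff₀ hnpos (by positivity)]
    have h1 : ((n.descFactorial K : ℝ)) ^ 2 ≤ ((n:ℝ)^K)^2 := by
      apply pow_le_pow_left₀ (le_of_lt hc) hcle
    have h2 : ((n:ℝ)^K)^2 = (n:ℝ)^(2*K) := by
      rw [← pow_mul]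
      congr 1
      ring
    have h3 : (n : ℝ) ^ (2 * K - 1) * n = (n:ℝ)^(2*K) := by
      rw [← pow_succ]
      congr 1
      omega
    calc 1 * ((n.descFactorial K : ℝ)) ^ 2 ≤ (n:ℝ)^(2*K) := by
          rw [one_mul]; exact h1.trans (le_of_eq h2)
      _ = (n : ℝ) ^ (2 * K - 1) * n := h3.symm
  calc 2 * (2:ℝ)^(K*K) * (2*K : ℝ)^(2*K) * ((1:ℝ)/n) * S
      ≤ 2 * (2:ℝ)^(K*K) * (2*K : ℝ)^(2*K) *
          ((n : ℝ) ^ (2 * K - 1) * ((n.descFactorial K : ℝ)⁻¹) ^ 2) * S := by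
        apply mul_le_mul_of_nonneg_right _ hS0
        apply mul_le_mul_of_nonneg_left hkey
        positivity
    _ = 2 * (2:ℝ)^(K*K) * (2*K : ℝ)^(2*K) * (n : ℝ) ^ (2 * K - 1) *
          ((n.descFactorial K : ℝ)⁻¹) ^ 2 * S := by ring

end QAPPaper
end
end

section
/- Let n ≥ 3 and let A = (a_ij) be a symmetric real n×n matrix with zero diagonal. Then the following identity holds: m_{22}(a) = (n(n−1))⁻¹ Σ_{i≠j} (a_ij − ā)² − (2(n−2)/(n(n−1)))·Σ_{i=1}^n ā_i². -/
open MeasureTheory ProbabilityTheory Filter Matrix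
open scoped NNReal Topology

noncomputable section

namespace QAPPaper

variable {X : Type*} [MeasurableSpace X]

variable {𝓡 𝓢 : Type*}

variable {Ω : Type*} [MeasurableSpace Ω]

theorem offSum_eq (n : ℕ) (f : Fin n → Fin n → ℝ) :
    offSum n f = ∑ i, ∑ j ∈ Finset.univ.erase i, f i j := by
  rw [offSum, Finset.sum_filter, Fintype.sum_prod_type]
  refine Finset.sum_congr rfl fun i _ => ?_
  rw [← Finset.sum_filter]
  congr 1
  ext j
  simp [ne_comm, eq_comm]

theorem offSum_swap (n : ℕ) (f : Fin n → Fin n → ℝ) :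
    offSum n f = offSum n (fun i j => f j i) := by
  unfold offSum
  refine Finset.sum_equiv (Equiv.prodComm _ _) (fun p => ?_) (fun p _ => ?_) <;>
    simp [ne_comm]

theorem dsum_swap (n : ℕ) (f : Fin n → Fin n → ℝ) :
    ∑ i, ∑ j ∈ Finset.univ.erase i, f i j = ∑ i, ∑ j ∈ Finset.univ.erase i, f j i := by
  rw [← offSum_eq, offSum_swap, offSum_eq]

/-- Lemma D.2 of the paper: for a symmetric zero-diagonal matrix
`A`, `m₂₂(a) = (n(n−1))⁻¹ Σ_{i≠j}(a_ij − ā)² − (2(n−2)/(n(n−1))) Σ_i ā_i²`. -/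
theorem statement_19 (n : ℕ) (hn : 3 ≤ n) (a : Fin n → Fin n → ℝ)
    (hsymm : ∀ i j, a i j = a j i) (hdiag : ∀ i, a i i = 0) :
    m22 n a =
      ((n : ℝ) * ((n : ℝ) - 1))⁻¹ * offSum n (fun i j => (a i j - offAvg n a) ^ 2) -
        (2 * ((n : ℝ) - 2) / ((n : ℝ) * ((n : ℝ) - 1))) * ∑ i, rowAvg n a i ^ 2 := by
  have hn3 : (3 : ℝ) ≤ (n : ℝ) := by exact_mod_cast hn
  have h2 : ((n : ℝ) - 2) ≠ 0 := by intro h; nlinarith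
  have hK : ((n : ℝ) * ((n : ℝ) - 1)) ≠ 0 := by
    have : (0 : ℝ) < (n : ℝ) * ((n : ℝ) - 1) := by nlinarith
    exact ne_of_gt this
  set m := offAvg n a with hm
  set r := rowAvg n a with hr
  have hcard : ∀ i : Fin n, ((Finset.univ.erase i).card : ℝ) = (n : ℝ) - 1 := by
    intro i
    rw [Finset.card_erase_of_mem (Finset.mem_univ i), Finset.card_univ, Fintype.card_fin,
      Nat.cast_sub (by omega)]
    simp
  have hrow : ∀ i, ∑ j ∈ Finset.univ.erase i, (a i j - m) = ((n : ℝ) - 2) * r i := by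
    intro i
    rw [hr, rowAvg, ← hm, mul_inv_cancel_left₀ h2]
  have hOff : offSum n a = (n : ℝ) * ((n : ℝ) - 1) * m := by
    rw [hm, offAvg, mul_inv_cancel_left₀ hK]
  have hsum0 : ∑ i, ∑ j ∈ Finset.univ.erase i, (a i j - m) = 0 := by
    have hper : ∀ i : Fin n, ∑ j ∈ Finset.univ.erase i, (a i j - m)
        = (∑ j ∈ Finset.univ.erase i, a i j) - (((n : ℝ) - 1) * m) := by
      intro i
      rw [Finset.sum_sub_distrib, Finset.sum_const, nsmul_eq_mul, hcard i]
    rw [Finset.sum_congr rfl (fun i _ => hper i), Finset.sum_sub_distrib, Finset.sum_const,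
      Finset.card_univ, Fintype.card_fin, nsmul_eq_mul, ← offSum_eq, hOff]
    ring
  have hRsum : ∑ i, r i = 0 := by
    have h := hsum0
    rw [Finset.sum_congr rfl (fun i _ => hrow i), ← Finset.mul_sum] at h
    exact (mul_eq_zero.mp h).resolve_left h2
  set R := ∑ i, r i ^ 2 with hR
  have hT1 : ∑ i, ∑ j ∈ Finset.univ.erase i, (a i j - m) * r i = ((n : ℝ) - 2) * R := by
    rw [hR, Finset.mul_sum]
    refine Finset.sum_congr rfl fun i _ => ?_
    rw [← Finset.sum_mul, hrow i]
    ring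
  have hT2 : ∑ i, ∑ j ∈ Finset.univ.erase i, (a i j - m) * r j = ((n : ℝ) - 2) * R := by
    rw [dsum_swap, ← hT1]
    refine Finset.sum_congr rfl fun i _ => Finset.sum_congr rfl fun j _ => ?_
    rw [hsymm j i]
  have hT3 : ∑ i, ∑ j ∈ Finset.univ.erase i, r i ^ 2 = ((n : ℝ) - 1) * R := by
    rw [hR, Finset.mul_sum]
    refine Finset.sum_congr rfl fun i _ => ?_
    rw [Finset.sum_const, nsmul_eq_mul, hcard i]
  have hT4 : ∑ i, ∑ j ∈ Finset.univ.erase i, r j ^ 2 = ((n : ℝ) - 1) * R := by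
    rw [dsum_swap]
    exact hT3
  have hT5 : ∑ i, ∑ j ∈ Finset.univ.erase i, r i * r j = -R := by
    have : ∀ i : Fin n, ∑ j ∈ Finset.univ.erase i, r i * r j = -(r i ^ 2) := by
      intro i
      rw [← Finset.mul_sum, Finset.sum_erase_eq_sub (Finset.mem_univ i), hRsum]
      ring
    rw [Finset.sum_congr rfl (fun i _ => this i), hR, ← Finset.sum_neg_distrib]
  have split : ∑ i, ∑ j ∈ Finset.univ.erase i, tilde n a i j ^ 2
      = (∑ i, ∑ j ∈ Finset.univ.erase i, (a i j - m) ^ 2)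
        + (∑ i, ∑ j ∈ Finset.univ.erase i, r i ^ 2)
        + (∑ i, ∑ j ∈ Finset.univ.erase i, r j ^ 2)
        + 2 * (∑ i, ∑ j ∈ Finset.univ.erase i, r i * r j)
        - 2 * (∑ i, ∑ j ∈ Finset.univ.erase i, (a i j - m) * r i)
        - 2 * (∑ i, ∑ j ∈ Finset.univ.erase i, (a i j - m) * r j) := by
    simp only [Finset.mul_sum, ← Finset.sum_add_distrib, ← Finset.sum_sub_distrib]
    refine Finset.sum_congr rfl fun i _ => ?_
    refine Finset.sum_congr rfl fun j _ => ?_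
    simp only [tilde, ← hm, ← hr]
    ring
  have key : ∑ i, ∑ j ∈ Finset.univ.erase i, tilde n a i j ^ 2
      = (∑ i, ∑ j ∈ Finset.univ.erase i, (a i j - m) ^ 2) - 2 * ((n : ℝ) - 2) * R := by
    rw [split, hT1, hT2, hT3, hT4, hT5]
    ring
  rw [m22, offSum_eq, key, offSum_eq]
  ring

end QAPPaper
end
end
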